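/- arXiv:1105.3466 — 4 statements merged into one kernel-verified Lean document; each statement's English description precedes it below -/
import Mathlib

section
/- Let z_1, ..., z_K be distinct complex numbers with positive integer multiplicities n_1, ..., n_K, N = n_1 + ... + n_K, and data f_{k,s} ∈ ℂ for 0 ≤ s ≤ n_k − 1. Let w_{k,r} be the barycentric weights. Define the polynomial π̂(z) = Σ_{k=1}^K π_k(z) · Σ_{s=0}^{n_k−1} (f_{k,s}/s!) · Σ_{r=0}^{n_k−1−s} w_{k,r}(z − z_k)^{r+s}. Then π̂ is a polynomial of degree at most N − 1 satisfying π̂^{(r)}(z_k) = f_{k,r} for every 1 ≤ k ≤ K and 0 ≤ r ≤ n_k − 1; that is, π̂ is the Hermite interpolant, giving the first barycentric form of the Hermite interpolant. -/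
open Polynomial Finset

/-!
Modulo `(X - z_k)^{n_k}` every summand `π_j · (…)` with `j ≠ k` vanishes, because `π_j` contains
the factor `(X - z_k)^{n_k}`, while `π_k W_k ≡ 1` turns the `k`-th summand into the truncated
Taylor polynomial `∑_{s < n_k} f_{k,s}/s! · (X - z_k)^s`. The derivatives of order `< n_k` at
`z_k` only depend on this residue class, which gives the interpolation conditions. The degree
bound is termwise: `deg π_k ≤ N - n_k`, and the `k`-th factor has degree `< n_k`.
-/

section CommRing

variable {A : Type*} [CommRing A]

-- The factor of `π_k` in `π̂`, for `q = X - z_k`, `c s = f_{k,s} / s!` and `v = w_k`.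
def barycentricFactor (q : A) (m : ℕ) (c v : ℕ → A) : A :=
  ∑ s ∈ range m, c s * ∑ r ∈ range (m - s), v r * q ^ (r + s)

theorem pow_dvd_pow_mul_sum_range_sub_sum_range (q : A) (v : ℕ → A) {m s : ℕ} (hs : s ≤ m) :
    q ^ m ∣ q ^ s * ∑ r ∈ range m, v r * q ^ r - ∑ r ∈ range (m - s), v r * q ^ (r + s) := by
  have hshift : q ^ s * ∑ r ∈ range m, v r * q ^ r = ∑ r ∈ range m, v r * q ^ (r + s) := by
    rw [mul_sum]
    exact sum_congr rfl fun r _ => by ring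
  rw [hshift, ← sum_range_add_sum_Ico _ (Nat.sub_le m s), add_sub_cancel_left]
  exact dvd_sum fun r hr => dvd_mul_of_dvd_right (pow_dvd_pow q (by grind)) _

theorem pow_dvd_mul_barycentricFactor_sub {q p : A} {m : ℕ} {v : ℕ → A} (c : ℕ → A)
    (hv : q ^ m ∣ p * ∑ r ∈ range m, v r * q ^ r - 1) :
    q ^ m ∣ p * barycentricFactor q m c v - ∑ s ∈ range m, c s * q ^ s := by
  rw [barycentricFactor, mul_sum, ← sum_sub_distrib]
  refine dvd_sum fun s hs => ?_
  have htrunc := pow_dvd_pow_mul_sum_range_sub_sum_range q v (mem_range.mp hs).le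
  have hsplit : p * (c s * ∑ r ∈ range (m - s), v r * q ^ (r + s)) - c s * q ^ s =
      c s * (q ^ s * (p * ∑ r ∈ range m, v r * q ^ r - 1) -
        p * (q ^ s * ∑ r ∈ range m, v r * q ^ r - ∑ r ∈ range (m - s), v r * q ^ (r + s))) := by
    ring
  rw [hsplit]
  exact dvd_mul_of_dvd_right (dvd_sub (dvd_mul_of_dvd_right hv _) (dvd_mul_of_dvd_right htrunc _)) _

end CommRing

section Polynomial

variable {R : Type*} [CommRing R]

theorem degree_X_sub_C_pow_le (a : R) (k : ℕ) : ((X - C a) ^ k).degree ≤ (k : WithBot ℕ) :=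
  degree_le_of_natDegree_le <|
    (natDegree_pow_le_of_le k (natDegree_X_sub_C_le a)).trans_eq (mul_one k)

theorem degree_barycentricFactor_X_sub_C_lt (a : R) (m : ℕ) (c v : ℕ → R) :
    (barycentricFactor (X - C a) m (fun s => C (c s)) (fun r => C (v r))).degree < m := by
  rw [← mem_degreeLT, barycentricFactor]
  refine sum_mem fun s hs => ?_
  rw [C_mul']
  refine Submodule.smul_mem _ _ (sum_mem fun r hr => ?_)
  rw [C_mul', mem_degreeLT]
  refine (degree_smul_le _ _).trans_lt ((degree_X_sub_C_pow_le a _).trans_lt ?_)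
  exact_mod_cast (by grind : r + s < m)

theorem eval_iterate_derivative_eq_zero_of_X_sub_C_pow_dvd {a : R} {m r : ℕ} {p : R[X]}
    (h : (X - C a) ^ m ∣ p) (hr : r < m) : (derivative^[r] p).eval a = 0 :=
  dvd_iff_isRoot.mp <|
    (dvd_pow_self _ (Nat.sub_ne_zero_of_lt hr)).trans
      (pow_sub_dvd_iterate_derivative_of_pow_dvd r h)

theorem eval_iterate_derivative_eq_of_X_sub_C_pow_dvd_sub {a : R} {m r : ℕ} {p q : R[X]}
    (h : (X - C a) ^ m ∣ p - q) (hr : r < m) :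
    (derivative^[r] p).eval a = (derivative^[r] q).eval a := by
  have := eval_iterate_derivative_eq_zero_of_X_sub_C_pow_dvd h hr
  rwa [iterate_map_sub, eval_sub, sub_eq_zero] at this

theorem eval_iterate_derivative_sum_C_mul_X_sub_C_pow (a : R) (c : ℕ → R) {m r : ℕ} (hr : r < m) :
    (derivative^[r] (∑ s ∈ range m, C (c s) * (X - C a) ^ s)).eval a = r.factorial * c r := by
  rw [← factorial_smul_hasseDeriv, LinearMap.smul_apply, eval_smul, ← taylor_coeff, map_sum]
  simp only [taylor_mul, taylor_pow, taylor_C, map_sub, taylor_X, add_sub_cancel_right,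
    finsetSum_coeff, coeff_C_mul_X_pow, sum_ite_eq, mem_range, hr, if_true, nsmul_eq_mul]

theorem degree_sum_prod_erase_mul_lt {ι : Type*} [Fintype ι] [DecidableEq ι] (z : ι → R)
    (n : ι → ℕ) {H : ι → R[X]} (hH : ∀ k, (H k).degree < n k) :
    (∑ k, (∏ j ∈ univ.erase k, (X - C (z j)) ^ (n j)) * H k).degree <
      ((∑ k, n k : ℕ) : WithBot ℕ) := by
  rw [← mem_degreeLT]
  refine sum_mem fun k _ => ?_
  have hπ : (∏ j ∈ univ.erase k, (X - C (z j)) ^ (n j)).degree ≤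
      ((∑ j ∈ univ.erase k, n j : ℕ) : WithBot ℕ) :=
    (degree_prod_le _ _).trans (by push_cast; exact sum_le_sum fun j _ => degree_X_sub_C_pow_le _ _)
  rw [mem_degreeLT, ← sum_erase_add _ _ (mem_univ k), Nat.cast_add]
  calc _ ≤ _ := degree_mul_le _ _
    _ ≤ ((∑ j ∈ univ.erase k, n j : ℕ) : WithBot ℕ) + (H k).degree := add_le_add_left hπ _
    _ < _ := WithBot.add_lt_add_left WithBot.coe_ne_bot (hH k)

theorem X_sub_C_pow_dvd_sum_prod_erase_mul_sub {ι : Type*} [Fintype ι] [DecidableEq ι]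
    (z : ι → R) (n : ι → ℕ) (H : ι → R[X]) (k : ι) :
    (X - C (z k)) ^ (n k) ∣
      ∑ j, (∏ i ∈ univ.erase j, (X - C (z i)) ^ (n i)) * H j -
        (∏ i ∈ univ.erase k, (X - C (z i)) ^ (n i)) * H k := by
  rw [← add_sum_erase _ _ (mem_univ k), add_sub_cancel_left]
  refine dvd_sum fun j hj => ?_
  have hk : k ∈ univ.erase j := mem_erase.mpr ⟨(ne_of_mem_erase hj).symm, mem_univ k⟩
  exact dvd_mul_of_dvd_left (dvd_prod_of_mem (fun i => (X - C (z i)) ^ (n i)) hk) _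

end Polynomial

theorem first_barycentric_form_is_hermite_interpolant_general
    (K : ℕ) (z : Fin K → ℂ)
    (n : Fin K → ℕ)
    (f : Fin K → ℕ → ℂ) (w : Fin K → ℕ → ℂ)
    (hw : ∀ k : Fin K,
      (X - C (z k)) ^ (n k) ∣
        (∏ j ∈ Finset.univ.erase k, (X - C (z j)) ^ (n j)) *
          (∑ r ∈ Finset.range (n k), C (w k r) * (X - C (z k)) ^ r) - 1) :
    (∑ k : Fin K, (∏ j ∈ Finset.univ.erase k, (X - C (z j)) ^ (n j)) *
        ∑ s ∈ Finset.range (n k), C (f k s / (s.factorial : ℂ)) *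
          ∑ r ∈ Finset.range (n k - s), C (w k r) * (X - C (z k)) ^ (r + s)).degree <
      ((∑ k, n k : ℕ) : WithBot ℕ) ∧
    ∀ k : Fin K, ∀ r < n k,
      (Polynomial.derivative^[r]
        (∑ k : Fin K, (∏ j ∈ Finset.univ.erase k, (X - C (z j)) ^ (n j)) *
          ∑ s ∈ Finset.range (n k), C (f k s / (s.factorial : ℂ)) *
            ∑ r ∈ Finset.range (n k - s), C (w k r) * (X - C (z k)) ^ (r + s))).eval (z k)
        = f k r := by
  set H : Fin K → ℂ[X] := fun k => barycentricFactor (X - C (z k)) (n k)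
    (fun s => C (f k s / (s.factorial : ℂ))) (fun r => C (w k r))
  refine ⟨degree_sum_prod_erase_mul_lt z n (H := H) fun k =>
    degree_barycentricFactor_X_sub_C_lt (z k) (n k) _ _, fun k r hr => ?_⟩
  have hdvd := dvd_add (X_sub_C_pow_dvd_sum_prod_erase_mul_sub z n H k)
    (pow_dvd_mul_barycentricFactor_sub (fun s => C (f k s / (s.factorial : ℂ))) (hw k))
  rw [sub_add_sub_cancel] at hdvd
  refine (eval_iterate_derivative_eq_of_X_sub_C_pow_dvd_sub hdvd hr).trans ?_
  rw [eval_iterate_derivative_sum_C_mul_X_sub_C_pow _ _ hr]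
  exact mul_div_cancel₀ _ (Nat.cast_ne_zero.mpr r.factorial_ne_zero)

/-- The first barycentric form of the Hermite interpolant: with barycentric
weights `w k r` (coefficients of the unique `W_k` of degree `≤ n k - 1` with
`(X - z k)^(n k) ∣ π_k·W_k - 1`), the polynomial
`π̂ = ∑_k π_k(z) · ∑_{s<n k} (f k s / s!) · ∑_{r < n k - s} w k r (z - z k)^(r+s)`
has degree at most `N - 1` and satisfies all Hermite interpolation conditions
`π̂^(r)(z k) = f k r`. -/
theorem first_barycentric_form_is_hermite_interpolant
    (K : ℕ) (z : Fin K → ℂ) (hz : Function.Injective z)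
    (n : Fin K → ℕ) (hn : ∀ k, 1 ≤ n k)
    (f : Fin K → ℕ → ℂ) (w : Fin K → ℕ → ℂ)
    (hw : ∀ k : Fin K,
      (X - C (z k)) ^ (n k) ∣
        (∏ j ∈ Finset.univ.erase k, (X - C (z j)) ^ (n j)) *
          (∑ r ∈ Finset.range (n k), C (w k r) * (X - C (z k)) ^ r) - 1) :
    (∑ k : Fin K, (∏ j ∈ Finset.univ.erase k, (X - C (z j)) ^ (n j)) *
        ∑ s ∈ Finset.range (n k), C (f k s / (s.factorial : ℂ)) *
          ∑ r ∈ Finset.range (n k - s), C (w k r) * (X - C (z k)) ^ (r + s)).degree <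
      ((∑ k, n k : ℕ) : WithBot ℕ) ∧
    ∀ k : Fin K, ∀ r < n k,
      (Polynomial.derivative^[r]
        (∑ k : Fin K, (∏ j ∈ Finset.univ.erase k, (X - C (z j)) ^ (n j)) *
          ∑ s ∈ Finset.range (n k), C (f k s / (s.factorial : ℂ)) *
            ∑ r ∈ Finset.range (n k - s), C (w k r) * (X - C (z k)) ^ (r + s))).eval (z k)
        = f k r :=
  first_barycentric_form_is_hermite_interpolant_general K z n f w hw
end

section
/- (Correctness of the barycentric weight algorithm.) Let z_1, ..., z_K be distinct complex numbers with positive integer multiplicities n_1, ..., n_K, let π_k(z) = Π_{j≠k} (z − z_j)^{n_j}, and let w_{k,r} be the barycentric weights. Fix k, set C_k = Π_{j≠k} (z_k − z_j)^{−n_j}, and let A_k be the multiset consisting of (z_j − z_k)^{-1} repeated n_j times for each j ≠ k. Then for each 0 ≤ r ≤ n_k − 1: w_{k,r} = C_k · h_r(A_k), where h_r(A_k) is the complete homogeneous symmetric polynomial of degree r evaluated at the elements of A_k. Equivalently, h_r(A_k) is obtained from the inverse power sums P_s = Σ_{j≠k} n_j (z_j − z_k)^{−s} via the triangular recurrence r·h_r(A_k)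 = Σ_{s=1}^r P_s·h_{r−s}(A_k) with h_0(A_k) = 1. -/
open Polynomial Finset

/-! Shifting by `z k` turns `π_k` into `E • G` with `G = ∏_{j ≠ k} (1 - a_j X) ^ n_j`,
`a_j = (z j - z k)⁻¹` and `E = Ck⁻¹`, so the defining congruence of the weights says that
`E • ∑ w r X ^ r` is the inverse of `G` modulo `X ^ n k`. The logarithmic derivative of `G` is
`-∑ P (s + 1) X ^ s`, and the recurrence for `I` says exactly that the logarithmic derivative of
`∑ I r X ^ r` is `+∑ P (s + 1) X ^ s`. Hence `G • ∑ I r X ^ r` has derivative zero and constant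
term one, so it is `1`, and comparing coefficients gives `w r = Ck * I r`. -/

namespace PowerSeries

section CommSemiring

variable {R : Type*} [CommSemiring R]

theorem derivative_prod_pow_of_derivative_eq_mul {ι : Type*} (s : Finset ι) (f q : ι → R⟦X⟧)
    (e : ι → ℕ) (hf : ∀ i ∈ s, d⁄dX R (f i) = q i * f i) :
    d⁄dX R (∏ i ∈ s, f i ^ e i) = (∑ i ∈ s, (e i : R⟦X⟧) * q i) * ∏ i ∈ s, f i ^ e i := by
  classical
  induction s using Finset.induction with
  | empty => simp
  | insert i s hi ih =>
    have hpow : d⁄dX R (f i ^ e i) = (e i : R⟦X⟧) * q i * f i ^ e i := by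
      rw [derivative_pow, hf i (mem_insert_self i s)]
      rcases e i with _ | m
      · simp
      · simp only [Nat.add_sub_cancel, pow_succ]; push_cast; ring
    rw [prod_insert hi, sum_insert hi, Derivation.leibniz, hpow,
      ih fun j hj => hf j (mem_insert_of_mem hj), smul_eq_mul, smul_eq_mul]
    ring

theorem derivative_mk_of_recurrence (P I : ℕ → R)
    (hrec : ∀ r : ℕ, 1 ≤ r → (r : R) * I r = ∑ s ∈ Icc 1 r, P s * I (r - s)) :
    d⁄dX R (mk I) = mk (fun s => P (s + 1)) * mk I := by
  ext r
  rw [coeff_derivative, coeff_mk, mul_comm, coeff_mul,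
    Nat.sum_antidiagonal_eq_sum_range_succ (fun i j => coeff i (mk _) * coeff j (mk I))]
  have hrec' := hrec (r + 1) le_add_self
  rw [← Ico_add_one_right_eq_Icc, sum_Ico_eq_sum_range] at hrec'
  push_cast at hrec'
  simp only [coeff_mk, hrec']
  refine sum_congr rfl fun s _ => ?_
  rw [add_comm 1 s, Nat.add_sub_add_right]

end CommSemiring

variable {R : Type*} [CommRing R]

theorem mk_pow_succ_mul_one_sub_C_mul_X (a : R) :
    mk (fun s => a ^ (s + 1)) * (1 - C a * X) = C a := by
  have h : mk (fun s => a ^ (s + 1)) = C a * rescale a (mk 1) := by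
    ext s; simp [rescale_mk, coeff_C_mul, pow_succ']
  rw [h, ← rescale_X, ← map_one (rescale a), ← map_sub, mul_assoc, ← map_mul,
    mk_one_mul_one_sub_eq_one, map_one, mul_one]

theorem derivative_one_sub_C_mul_X (a : R) :
    d⁄dX R (1 - C a * X) = -mk (fun s => a ^ (s + 1)) * (1 - C a * X) := by
  rw [neg_mul, mk_pow_succ_mul_one_sub_C_mul_X]
  simp

theorem derivative_prod_one_sub_C_mul_X_pow {ι : Type*} (s : Finset ι) (a : ι → R) (e : ι → ℕ) :
    d⁄dX R (∏ i ∈ s, (1 - C (a i) * X) ^ e i) =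
      -mk (fun t => ∑ i ∈ s, (e i : R) * a i ^ (t + 1)) * ∏ i ∈ s, (1 - C (a i) * X) ^ e i := by
  rw [derivative_prod_pow_of_derivative_eq_mul s _ _ e fun i _ => derivative_one_sub_C_mul_X (a i)]
  congr 1
  ext t
  simp only [mul_neg, sum_neg_distrib, map_neg, map_sum, coeff_mk]
  refine congrArg _ (sum_congr rfl fun i _ => ?_)
  rw [← map_natCast (C (R := R)), coeff_C_mul, coeff_mk]

theorem mul_eq_one_of_derivative_eq [IsAddTorsionFree R] {G F q : R⟦X⟧}
    (hG : d⁄dX R G = -q * G) (hF : d⁄dX R F = q * F)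
    (h0 : constantCoeff G * constantCoeff F = 1) : G * F = 1 := by
  refine derivative.ext ?_ (by simpa using h0)
  rw [Derivation.leibniz, hG, hF, derivative_one, smul_eq_mul, smul_eq_mul]
  ring

theorem prod_one_sub_C_mul_X_pow_mul_mk_eq_one [IsAddTorsionFree R] {ι : Type*} (s : Finset ι)
    (a : ι → R) (e : ι → ℕ) (P I : ℕ → R) (hP : ∀ t, P t = ∑ i ∈ s, (e i : R) * a i ^ t)
    (hI0 : I 0 = 1) (hrec : ∀ r : ℕ, 1 ≤ r → (r : R) * I r = ∑ t ∈ Icc 1 r, P t * I (r - t)) :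
    (∏ i ∈ s, (1 - C (a i) * X) ^ e i) * mk I = 1 := by
  have hG := derivative_prod_one_sub_C_mul_X_pow s a e
  simp only [← hP] at hG
  exact mul_eq_one_of_derivative_eq hG (derivative_mk_of_recurrence P I hrec) (by simp [hI0])

theorem coeff_eq_of_X_pow_dvd_mul_sub_one {G F W : R⟦X⟧} {m r : ℕ} (hdvd : X ^ m ∣ G * W - 1)
    (hGF : G * F = 1) (hr : r < m) : coeff r W = coeff r F := by
  have h : X ^ m ∣ W - F := by
    convert hdvd.mul_right F using 1
    linear_combination -W * hGF
  exact sub_eq_zero.mp (X_pow_dvd_iff.mp h r hr)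

theorem X_pow_dvd_coe_taylor {p : R[X]} {c : R} {m : ℕ}
    (h : (Polynomial.X - Polynomial.C c) ^ m ∣ p) : (X : R⟦X⟧) ^ m ∣ (taylor c p : R⟦X⟧) := by
  simpa using map_dvd (Polynomial.coeToPowerSeries.ringHom.comp (taylorAlgHom c).toRingHom) h

end PowerSeries

namespace Polynomial

@[norm_cast]
theorem coe_prod {R ι : Type*} [CommSemiring R] (s : Finset ι) (f : ι → R[X]) :
    ((∏ i ∈ s, f i : R[X]) : PowerSeries R) = ∏ i ∈ s, (f i : PowerSeries R) :=
  map_prod coeToPowerSeries.ringHom f s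

variable {K : Type*} [Field K]

theorem taylor_X_sub_C_of_ne {b c : K} (h : b ≠ c) :
    taylor c (X - C b) = C (c - b) * (1 - C (b - c)⁻¹ * X) := by
  have : (c - b) * (b - c)⁻¹ = -1 := by
    rw [← neg_sub, neg_mul, mul_inv_cancel₀ (sub_ne_zero.mpr h)]
  rw [mul_sub, mul_one, ← mul_assoc, ← C_mul, this]
  simp only [map_sub, taylor_X, taylor_C, map_neg, C_1]
  ring

theorem taylor_prod_X_sub_C_pow {ι : Type*} (s : Finset ι) (z : ι → K) (n : ι → ℕ) {c : K}
    (hz : ∀ j ∈ s, z j ≠ c) :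
    taylor c (∏ j ∈ s, (X - C (z j)) ^ n j) =
      C (∏ j ∈ s, (c - z j) ^ n j) * ∏ j ∈ s, (1 - C (z j - c)⁻¹ * X) ^ n j := by
  simp only [← taylorAlgHom_apply, map_prod, map_pow, ← prod_mul_distrib, ← mul_pow]
  refine prod_congr rfl fun j hj => ?_
  rw [taylorAlgHom_apply, taylor_X_sub_C_of_ne (hz j hj)]

theorem taylor_sum_C_mul_X_sub_C_pow (c : K) (m : ℕ) (w : ℕ → K) :
    taylor c (∑ r ∈ range m, C (w r) * (X - C c) ^ r) = ∑ r ∈ range m, C (w r) * X ^ r := by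
  simp

end Polynomial

theorem barycentric_weights_algorithm_correct_general
    (K : ℕ) (z : Fin K → ℂ) (hz : Function.Injective z)
    (n : Fin K → ℕ) (k : Fin K)
    (w : ℕ → ℂ)
    (hdiv : (X - C (z k)) ^ (n k) ∣
      (∏ j ∈ Finset.univ.erase k, (X - C (z j)) ^ (n j)) *
        (∑ r ∈ Finset.range (n k), C (w r) * (X - C (z k)) ^ r) - 1)
    (Ck : ℂ) (hCk : Ck = ∏ j ∈ Finset.univ.erase k, ((z k - z j) ^ (n j))⁻¹)
    (P : ℕ → ℂ)
    (hP : ∀ s : ℕ, P s = ∑ j ∈ Finset.univ.erase k, (n j : ℂ) * ((z j - z k) ^ s)⁻¹)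
    (I : ℕ → ℂ) (hI0 : I 0 = 1)
    (hIrec : ∀ r : ℕ, 1 ≤ r → (r : ℂ) * I r = ∑ s ∈ Finset.Icc 1 r, P s * I (r - s)) :
    ∀ r < n k, w r = Ck * I r := by
  intro r hr
  have hne : ∀ j ∈ univ.erase k, z j ≠ z k := fun j hj => hz.ne (ne_of_mem_erase hj)
  set E := ∏ j ∈ univ.erase k, (z k - z j) ^ n j
  have hE : E * Ck = 1 := by
    rw [hCk, prod_inv_distrib]
    exact mul_inv_cancel₀ <|
      prod_ne_zero_iff.mpr fun j hj => pow_ne_zero _ (sub_ne_zero.mpr (hne j hj).symm)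
  have hGI := PowerSeries.prod_one_sub_C_mul_X_pow_mul_mk_eq_one (univ.erase k)
    (fun j => (z j - z k)⁻¹) n P I (by simpa [inv_pow] using hP) hI0 hIrec
  have hGF : PowerSeries.C E *
      (∏ j ∈ univ.erase k, (1 - PowerSeries.C (z j - z k)⁻¹ * PowerSeries.X) ^ n j) *
      (PowerSeries.C Ck * PowerSeries.mk I) = 1 := by
    rw [mul_mul_mul_comm, ← map_mul, hE, hGI, map_one, one_mul]
  have hdvd := PowerSeries.X_pow_dvd_coe_taylor hdiv
  rw [map_sub, taylor_mul, taylor_prod_X_sub_C_pow _ _ _ hne, taylor_sum_C_mul_X_sub_C_pow,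
    taylor_one] at hdvd
  push_cast [map_one] at hdvd
  simpa [Polynomial.finsetSum_coeff, Polynomial.coeff_C_mul_X_pow, hr] using
    PowerSeries.coeff_eq_of_X_pow_dvd_mul_sub_one hdvd hGF hr

/-- Correctness of the barycentric weight algorithm.  With distinct grid points
`z j` of multiplicities `n j`, fix `k` and let `w r` be the barycentric weights
at `z k` (the coefficients, in powers of `(z - z k)`, of the unique polynomial
`W` of degree `≤ n k - 1` with `(X - z k)^(n k) ∣ π_k·W - 1`).  Let
`C_k = ∏_{j ≠ k} (z k - z j)^(-n j)`, let `P s = ∑_{j ≠ k} n j·(z j - z k)^(-s)`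
be the inverse power sums of the multiset `A_k`, and let `I r = h_r(A_k)` be
determined by the triangular recurrence `I 0 = 1`,
`r·I r = ∑_{s=1}^{r} P s · I (r-s)` (which characterizes the complete
homogeneous symmetric function of `A_k`).  Then `w r = C_k · I r` for every
`0 ≤ r ≤ n k - 1`. -/
theorem barycentric_weights_algorithm_correct
    (K : ℕ) (z : Fin K → ℂ) (hz : Function.Injective z)
    (n : Fin K → ℕ) (hn : ∀ k, 1 ≤ n k) (k : Fin K)
    (w : ℕ → ℂ)
    (hdiv : (X - C (z k)) ^ (n k) ∣
      (∏ j ∈ Finset.univ.erase k, (X - C (z j)) ^ (n j)) *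
        (∑ r ∈ Finset.range (n k), C (w r) * (X - C (z k)) ^ r) - 1)
    (Ck : ℂ) (hCk : Ck = ∏ j ∈ Finset.univ.erase k, ((z k - z j) ^ (n j))⁻¹)
    (P : ℕ → ℂ)
    (hP : ∀ s : ℕ, P s = ∑ j ∈ Finset.univ.erase k, (n j : ℂ) * ((z j - z k) ^ s)⁻¹)
    (I : ℕ → ℂ) (hI0 : I 0 = 1)
    (hIrec : ∀ r : ℕ, 1 ≤ r → (r : ℂ) * I r = ∑ s ∈ Finset.Icc 1 r, P s * I (r - s)) :
    ∀ r < n k, w r = Ck * I r :=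
  barycentric_weights_algorithm_correct_general K z hz n k w hdiv Ck hCk P hP I hI0 hIrec
end

section
/- (Barycentric weight update when new data is introduced at a point ζ ≠ z_k.) Let z_k, ζ ∈ ℂ with ζ ≠ z_k, let n_k ≥ 1, and let W_k(z) = Σ_{r=0}^{n_k−1} w_{k,r}(z − z_k)^r be a polynomial of degree at most n_k − 1. Define w'_{k,0} = w_{k,0}/(z_k − ζ) and w'_{k,r} = (w_{k,r} − w'_{k,r−1})/(z_k − ζ) for 1 ≤ r ≤ n_k − 1, and set W'_k(z) = Σ_{r=0}^{n_k−1} w'_{k,r}(z − z_k)^r. Then W'_k is the unique polynomial of degree at most n_k − 1 with (X − z_k)^{n_k} dividing (X − ζ)·W'_k − W_k. Consequently, if P ∈ ℂ[X] satisfies (X − z_k)^{n_k} | P·W_k − 1, then (X − z_k)^{n_k} | P·(X − ζ)·W'_k − 1; i.e., the updated weights w'_{k,r} are the barycentric weights for the prefactor P(z)(z − ζ). -/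
open Polynomial Finset

/-!
Writing `X - ζ = (X - z_k) + (z_k - ζ)`, the recurrence defining `w'` makes
`(X - ζ) W' - W` telescope to the single term `w'_{n-1} (X - z_k)^n`.
Uniqueness holds because `X - ζ` is coprime to `(X - z_k)^n`: two solutions differ by a
multiple of `(X - z_k)^n` of degree `< n`, hence agree.
-/

namespace Polynomial

variable {R : Type*} [CommRing R]

theorem degree_sum_range_C_mul_X_sub_C_pow_lt [Nontrivial R] (a : R) (c : ℕ → R) (n : ℕ) :
    (∑ r ∈ range n, C (c r) * (X - C a) ^ r).degree < (n : WithBot ℕ) := by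
  refine (degree_sum_le _ _).trans_lt <| (Finset.sup_lt_iff (WithBot.bot_lt_coe n)).2 fun r hr => ?_
  calc (C (c r) * (X - C a) ^ r).degree ≤ (r : WithBot ℕ) :=
        degree_le_of_natDegree_le <| (natDegree_C_mul_le _ _).trans <|
          (natDegree_pow_le_of_le r (natDegree_X_sub_C_le a)).trans_eq (mul_one r)
    _ < n := by exact_mod_cast mem_range.1 hr

theorem X_sub_C_mul_sum_range_succ_sub_sum {a b : R} {w w' : ℕ → R} {n : ℕ}
    (h0 : (a - b) * w' 0 = w 0) (hsucc : ∀ r < n, (a - b) * w' (r + 1) = w (r + 1) - w' r) :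
    (X - C b) * ∑ r ∈ range (n + 1), C (w' r) * (X - C a) ^ r -
        ∑ r ∈ range (n + 1), C (w r) * (X - C a) ^ r =
      C (w' n) * (X - C a) ^ (n + 1) := by
  induction n with
  | zero =>
    simp only [zero_add, sum_range_one, pow_zero, mul_one, pow_one, ← h0, C_mul, C_sub]
    ring
  | succ n ih =>
    have hw : w (n + 1) = (a - b) * w' (n + 1) + w' n := by rw [hsucc n n.lt_succ_self]; ring
    rw [sum_range_succ _ (n + 1), sum_range_succ _ (n + 1), mul_add, add_sub_add_comm,
      ih fun r hr => hsucc r (by omega), hw]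
    simp only [C_mul, C_add, C_sub]
    ring

theorem X_sub_C_pow_dvd_mul_sum_range_sub_sum {a b : R} {w w' : ℕ → R} {n : ℕ}
    (h0 : (a - b) * w' 0 = w 0) (hsucc : ∀ r, r + 1 < n → (a - b) * w' (r + 1) = w (r + 1) - w' r) :
    (X - C a) ^ n ∣ (X - C b) * ∑ r ∈ range n, C (w' r) * (X - C a) ^ r -
        ∑ r ∈ range n, C (w r) * (X - C a) ^ r := by
  cases n with
  | zero => simp
  | succ n =>
    rw [X_sub_C_mul_sum_range_succ_sub_sum h0 fun r hr => hsucc r (by omega)]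
    exact dvd_mul_left _ _

theorem eq_of_dvd_mul_sub_of_dvd_mul_sub [IsDomain R] {p q U V V' : R[X]} (hpq : IsCoprime p q)
    (hV : V.degree < q.degree) (hV' : V'.degree < q.degree)
    (h : q ∣ p * V - U) (h' : q ∣ p * V' - U) : V = V' := by
  have hq : q ∣ p * (V - V') := by
    simpa only [mul_sub, sub_sub_sub_cancel_right] using dvd_sub h h'
  exact sub_eq_zero.mp <| eq_zero_of_dvd_of_degree_lt (hpq.symm.dvd_of_dvd_mul_left hq)
    ((degree_sub_le V V').trans_lt (max_lt hV hV'))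

end Polynomial

theorem dvd_mul_mul_sub_one_of_dvd_mul_sub {R : Type*} [CommRing R] {q p P W W' : R}
    (h : q ∣ p * W' - W) (hP : q ∣ P * W - 1) : q ∣ P * p * W' - 1 := by
  have hsplit : P * p * W' - 1 = P * (p * W' - W) + (P * W - 1) := by ring
  exact hsplit ▸ dvd_add (h.mul_left P) hP

theorem barycentric_weight_update_general
    (zk ζ : ℂ) (hne : ζ ≠ zk) (nk : ℕ)
    (w w' : ℕ → ℂ)
    (hw'0 : w' 0 = w 0 / (zk - ζ))
    (hw' : ∀ r : ℕ, 1 ≤ r → r ≤ nk - 1 → w' r = (w r - w' (r - 1)) / (zk - ζ)) :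
    ((X - C zk) ^ nk ∣
        (X - C ζ) * (∑ r ∈ Finset.range nk, C (w' r) * (X - C zk) ^ r) -
          (∑ r ∈ Finset.range nk, C (w r) * (X - C zk) ^ r) ∧
      ∀ V : Polynomial ℂ, V.degree < (nk : WithBot ℕ) →
        (X - C zk) ^ nk ∣
          (X - C ζ) * V - (∑ r ∈ Finset.range nk, C (w r) * (X - C zk) ^ r) →
        V = ∑ r ∈ Finset.range nk, C (w' r) * (X - C zk) ^ r) ∧
    ∀ P : Polynomial ℂ,
      (X - C zk) ^ nk ∣ P * (∑ r ∈ Finset.range nk, C (w r) * (X - C zk) ^ r) - 1 →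
      (X - C zk) ^ nk ∣
        P * (X - C ζ) * (∑ r ∈ Finset.range nk, C (w' r) * (X - C zk) ^ r) - 1 := by
  have hs : zk - ζ ≠ 0 := sub_ne_zero.mpr hne.symm
  have hdvd := X_sub_C_pow_dvd_mul_sum_range_sub_sum (w := w) (w' := w') (n := nk)
    (by rw [hw'0, mul_div_cancel₀ _ hs])
    fun r hr => by rw [hw' (r + 1) (by omega) (by omega), mul_div_cancel₀ _ hs, Nat.add_sub_cancel]
  have hdeg : ((X - C zk) ^ nk).degree = (nk : WithBot ℕ) := by simp [degree_pow]
  have hcop : IsCoprime (X - C ζ) ((X - C zk) ^ nk) :=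
    (isCoprime_X_sub_C_of_isUnit_sub (sub_ne_zero.mpr hne).isUnit).pow_right
  refine ⟨⟨hdvd, fun V hV hVdvd => ?_⟩, fun P hP => dvd_mul_mul_sub_one_of_dvd_mul_sub hdvd hP⟩
  exact eq_of_dvd_mul_sub_of_dvd_mul_sub hcop (hdeg ▸ hV)
    (hdeg ▸ degree_sum_range_C_mul_X_sub_C_pow_lt zk w' nk) hVdvd hdvd

/-- Barycentric weight update when new data is introduced at a point `ζ ≠ z_k`.
With `w' 0 = w 0 / (z_k - ζ)` and `w' r = (w r - w' (r-1))/(z_k - ζ)` for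
`1 ≤ r ≤ n_k - 1`, the polynomial `W' = ∑_{r < n_k} w' r (X - z_k)^r` is the
unique polynomial of degree at most `n_k - 1` with
`(X - z_k)^(n_k) ∣ (X - ζ)·W' - W`.  Consequently, if
`(X - z_k)^(n_k) ∣ P·W - 1` then `(X - z_k)^(n_k) ∣ P·(X - ζ)·W' - 1`, i.e. the
updated weights are the barycentric weights for the prefactor `P(z)(z - ζ)`. -/
theorem barycentric_weight_update
    (zk ζ : ℂ) (hne : ζ ≠ zk) (nk : ℕ) (hnk : 1 ≤ nk)
    (w w' : ℕ → ℂ)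
    (hw'0 : w' 0 = w 0 / (zk - ζ))
    (hw' : ∀ r : ℕ, 1 ≤ r → r ≤ nk - 1 → w' r = (w r - w' (r - 1)) / (zk - ζ)) :
    ((X - C zk) ^ nk ∣
        (X - C ζ) * (∑ r ∈ Finset.range nk, C (w' r) * (X - C zk) ^ r) -
          (∑ r ∈ Finset.range nk, C (w r) * (X - C zk) ^ r) ∧
      ∀ V : Polynomial ℂ, V.degree < (nk : WithBot ℕ) →
        (X - C zk) ^ nk ∣
          (X - C ζ) * V - (∑ r ∈ Finset.range nk, C (w r) * (X - C zk) ^ r) →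
        V = ∑ r ∈ Finset.range nk, C (w' r) * (X - C zk) ^ r) ∧
    ∀ P : Polynomial ℂ,
      (X - C zk) ^ nk ∣ P * (∑ r ∈ Finset.range nk, C (w r) * (X - C zk) ^ r) - 1 →
      (X - C zk) ^ nk ∣
        P * (X - C ζ) * (∑ r ∈ Finset.range nk, C (w' r) * (X - C zk) ^ r) - 1 :=
  barycentric_weight_update_general zk ζ hne nk w w' hw'0 hw'
end

section
/- Let n be a positive integer and let P_1, ..., P_n be real numbers with |P_r| ≤ 1 for all 1 ≤ r ≤ n. Let M be the (n+1)×(n+1) lower triangular matrix with rows and columns indexed 0, ..., n, with diagonal entries M_{0,0} = 1 and M_{i,i} = i for 1 ≤ i ≤ n, and below-diagonal entries M_{i,j} = −P_{i−j} for i > j. Then M is invertible and every entry of M^{-1} has absolute value at most 1. -/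
open Matrix

/-- The `(n+1)×(n+1)` lower triangular matrix of the scaled Newton-type system,
with diagonal `1, 1, 2, 3, ..., n` and below-diagonal entries `-P_{i-j}` where
`|P_r| ≤ 1`, is invertible and every entry of its inverse has absolute value at
most `1`. -/
theorem newton_matrix_inverse_entries_le_one
    (n : ℕ) (hn : 1 ≤ n) (P : ℕ → ℝ)
    (hP : ∀ r : ℕ, 1 ≤ r → r ≤ n → |P r| ≤ 1)
    (M : Matrix (Fin (n + 1)) (Fin (n + 1)) ℝ)
    (hdiag0 : M 0 0 = 1)
    (hdiag : ∀ i : Fin (n + 1), 1 ≤ (i : ℕ) → M i i = ((i : ℕ) : ℝ))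
    (hlower : ∀ i j : Fin (n + 1), (j : ℕ) < (i : ℕ) → M i j = -P ((i : ℕ) - (j : ℕ)))
    (hupper : ∀ i j : Fin (n + 1), (i : ℕ) < (j : ℕ) → M i j = 0) :
    IsUnit M ∧ ∀ i j, |M⁻¹ i j| ≤ 1 := by
  -- M is lower triangular
  have hBT : M.BlockTriangular (OrderDual.toDual : Fin (n + 1) → (Fin (n + 1))ᵒᵈ) := by
    intro i j h
    exact hupper i j (by exact_mod_cast (OrderDual.toDual_lt_toDual.mp h))
  -- diagonal entries
  have hdiag' : ∀ i : Fin (n + 1), M i i = if (i : ℕ) = 0 then 1 else ((i : ℕ) : ℝ) := by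
    intro i
    by_cases h : (i : ℕ) = 0
    · have : i = 0 := Fin.ext (by simpa using h)
      simp [this, h, hdiag0]
    · simp [h, hdiag i (Nat.one_le_iff_ne_zero.mpr h)]
  have hdiag_ne : ∀ i : Fin (n + 1), M i i ≠ 0 := by
    intro i
    rw [hdiag' i]
    by_cases h : (i : ℕ) = 0
    · simp [h]
    · simp [h]
  have hdet : M.det ≠ 0 := by
    rw [Matrix.det_of_lowerTriangular M hBT]
    exact Finset.prod_ne_zero_iff.mpr fun i _ => hdiag_ne i
  have hdetU : IsUnit M.det := isUnit_iff_ne_zero.mpr hdet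
  have hU : IsUnit M := (Matrix.isUnit_iff_isUnit_det M).mpr hdetU
  haveI : Invertible M := M.invertibleOfIsUnitDet hdetU
  set N := M⁻¹ with hN
  have hNT : N.BlockTriangular (OrderDual.toDual : Fin (n + 1) → (Fin (n + 1))ᵒᵈ) :=
    Matrix.blockTriangular_inv_of_blockTriangular hBT
  have hMN : M * N = 1 := Matrix.mul_nonsing_inv M hdetU
  -- upper entries of N are zero
  have hNzero : ∀ i j : Fin (n + 1), (i : ℕ) < (j : ℕ) → N i j = 0 := by
    intro i j h
    exact hNT (by exact_mod_cast OrderDual.toDual_lt_toDual.mpr (Fin.lt_def.mpr h))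
  refine ⟨hU, ?_⟩
  have key : ∀ (m : ℕ) (i j : Fin (n + 1)), (i : ℕ) = m → |N i j| ≤ 1 := by
    intro m
    induction m using Nat.strong_induction_on with
    | _ m IH =>
    intro i j him
    rcases lt_or_ge (i : ℕ) (j : ℕ) with hij | hij
    · rw [hNzero i j hij]; simp
    -- the basic equation from M * N = 1
    have heq : ∑ k : Fin (n + 1), M i k * N k j = if i = j then 1 else 0 := by
      have := congrArg (fun A => A i j) hMN
      simpa [Matrix.mul_apply, Matrix.one_apply] using this
    have hji : j ≤ i := Fin.le_def.mpr hij
    -- restrict the sum to Icc j i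
    have hsum1 : ∑ k : Fin (n + 1), M i k * N k j = ∑ k ∈ Finset.Icc j i, M i k * N k j := by
      refine (Finset.sum_subset (Finset.subset_univ _) ?_).symm
      intro k _ hk
      rw [Finset.mem_Icc, not_and_or] at hk
      rcases hk with hk | hk
      · rw [hNzero k j (Fin.lt_def.mp (lt_of_not_ge hk))]
        ring
      · rw [hupper i k (Fin.lt_def.mp (lt_of_not_ge hk))]
        ring
    have hsum2 : ∑ k ∈ Finset.Icc j i, M i k * N k j
        = M i i * N i j + ∑ k ∈ Finset.Ico j i, M i k * N k j := by
      rw [← Finset.Ico_insert_right hji, Finset.sum_insert (by simp)]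
    have hmain : M i i * N i j + ∑ k ∈ Finset.Ico j i, M i k * N k j
        = if i = j then 1 else 0 := by
      rw [← hsum2, ← hsum1, heq]
    -- bound the Ico sum
    have hbound : |∑ k ∈ Finset.Ico j i, M i k * N k j| ≤ ((i : ℕ) : ℝ) - ((j : ℕ) : ℝ) := by
      calc |∑ k ∈ Finset.Ico j i, M i k * N k j|
          ≤ ∑ k ∈ Finset.Ico j i, |M i k * N k j| := Finset.abs_sum_le_sum_abs _ _
        _ ≤ ∑ _k ∈ Finset.Ico j i, (1 : ℝ) := by
            refine Finset.sum_le_sum ?_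
            intro k hk
            rw [Finset.mem_Ico] at hk
            have hki : (k : ℕ) < (i : ℕ) := Fin.lt_def.mp hk.2
            rw [abs_mul, hlower i k hki, abs_neg]
            have h1 : |P ((i : ℕ) - (k : ℕ))| ≤ 1 := by
              refine hP _ (by omega) (by omega)
            have h2 : |N k j| ≤ 1 := IH (k : ℕ) (him ▸ hki) k j rfl
            calc |P ((i : ℕ) - (k : ℕ))| * |N k j| ≤ 1 * 1 :=
                  mul_le_mul h1 h2 (abs_nonneg _) zero_le_one
              _ = 1 := by ring
        _ = ((Finset.Ico j i).card : ℝ) := by simp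
        _ = ((i : ℕ) : ℝ) - ((j : ℕ) : ℝ) := by
            rw [Fin.card_Ico]
            have : (j : ℕ) ≤ (i : ℕ) := hij
            push_cast [Nat.cast_sub this]
            ring
    rcases eq_or_lt_of_le hij with hij' | hij'
    · -- diagonal case
      have hijeq : i = j := Fin.ext hij'.symm
      have hIco : Finset.Ico j i = ∅ := by
        rw [Finset.Ico_eq_empty_iff]
        exact fun h => absurd (Fin.lt_def.mp h) (by omega)
      rw [hIco, Finset.sum_empty, add_zero, if_pos hijeq] at hmain
      have : N i j = (M i i)⁻¹ := (inv_eq_of_mul_eq_one_right hmain).symm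
      rw [this, abs_inv, hdiag' i]
      by_cases h0 : (i : ℕ) = 0
      · simp [h0]
      · rw [if_neg h0]
        rw [abs_of_nonneg (by positivity)]
        rw [inv_le_one_iff₀]
        right
        exact_mod_cast Nat.one_le_iff_ne_zero.mpr h0
    · -- strictly below-diagonal case
      have hine : i ≠ j := fun h => absurd (congrArg Fin.val h) (by omega)
      rw [if_neg hine] at hmain
      have hi1 : 1 ≤ (i : ℕ) := by omega
      have hMii : M i i = ((i : ℕ) : ℝ) := hdiag i hi1
      have hipos : (0 : ℝ) < ((i : ℕ) : ℝ) := by exact_mod_cast hi1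
      rw [hMii] at hmain
      have hNij : ((i : ℕ) : ℝ) * N i j = -∑ k ∈ Finset.Ico j i, M i k * N k j := by
        linarith [hmain]
      refine le_of_mul_le_mul_right ?_ hipos
      calc |N i j| * ((i : ℕ) : ℝ)
          = |((i : ℕ) : ℝ) * N i j| := by
            rw [abs_mul, abs_of_pos hipos]; ring
        _ = |∑ k ∈ Finset.Ico j i, M i k * N k j| := by rw [hNij, abs_neg]
        _ ≤ ((i : ℕ) : ℝ) - ((j : ℕ) : ℝ) := hbound
        _ ≤ 1 * ((i : ℕ) : ℝ) := by
            have : (0 : ℝ) ≤ ((j : ℕ) : ℝ) := Nat.cast_nonneg _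
            linarith
  intro i j
  exact key (i : ℕ) i j rfl
end
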